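/- Let h : ℕ → ℝ and V ~ Poisson(α) with E[|Δ²h(V)|] ≤ ν < ∞. Then for all x ∈ [0, α], the derivative of ĥ(x) = E[h(Poisson(x))] satisfies |ĥ'(x)| ≤ (e^α - 1)ν + |h(1) - h(0)|. -/

import Mathlib

open scoped BigOperators

/-- Probability mass function of the Poisson distribution with parameter `x`. -/
noncomputable def poiPMF (x : ℝ) (k : ℕ) : ℝ := Real.exp (-x) * x ^ k / (Nat.factorial k)

/-!
Write `g k = h (k + 1) - h k`, so that `Δ²h = Δg`. Telescoping gives
`|g k| ≤ |g 0| + ∑_{j<k} |Δg j|`, and exchanging the order of summation turns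
`∑_k (∑_{j<k} |Δg j|) P(X = k)` into `∑_j |Δg j| P(X > j)` for `X ~ Poisson(x)`. The Poisson tail
satisfies `P(X > j) ≤ (e^α - 1) P(V = j)` for `V ~ Poisson(α)` and `x ≤ α`, which bounds the
second sum by `(e^α - 1) ν`.
-/

open Finset Real
open scoped Nat

lemma abs_le_abs_zero_add_sum_range (g : ℕ → ℝ) (k : ℕ) :
    |g k| ≤ |g 0| + ∑ j ∈ range k, |g (j + 1) - g j| := by
  have := dist_le_range_sum_dist g k
  simp only [Real.dist_eq, abs_sub_comm (g _) (g (_ + 1))] at this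
  linarith [abs_sub_abs_le_abs_sub (g k) (g 0), abs_sub_comm (g 0) (g k)]

lemma sum_range_sum_range_mul_le_sum_range_mul_tsum {a p : ℕ → ℝ} (ha : ∀ j, 0 ≤ a j)
    (hp : ∀ k, 0 ≤ p k) (hps : Summable p) (N : ℕ) :
    ∑ k ∈ range N, (∑ j ∈ range k, a j) * p k ≤ ∑ j ∈ range N, a j * ∑' m, p (j + 1 + m) := by
  simp only [sum_mul, ← Nat.Ico_zero_eq_range]
  rw [← sum_Ico_Ico_comm']
  gcongr with j
  rw [← mul_sum, sum_Ico_eq_sum_range]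
  exact mul_le_mul_of_nonneg_left
    ((hps.comp_injective (add_right_injective _)).sum_le_tsum _ fun m _ => hp _) (ha j)

theorem abs_tsum_mul_le_of_tsum_tail_le {g p q : ℕ → ℝ} {c S : ℝ} (hp0 : ∀ k, 0 ≤ p k)
    (hp : HasSum p 1) (hq : ∀ j, 0 ≤ q j) (hc : 0 ≤ c)
    (htail : ∀ j, ∑' m, p (j + 1 + m) ≤ c * q j)
    (hsum : Summable fun j => |g (j + 1) - g j| * q j)
    (hS : ∑' j, |g (j + 1) - g j| * q j ≤ S) :
    |∑' k, g k * p k| ≤ c * S + |g 0| := by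
  set B : ℕ → ℝ := fun k => (∑ j ∈ range k, |g (j + 1) - g j|) * p k
  have hB0 : ∀ k, 0 ≤ B k := fun k => by positivity [hp0 k]
  have hB : ∀ N, ∑ k ∈ range N, B k ≤ c * S := fun N => calc
    ∑ k ∈ range N, B k ≤ ∑ j ∈ range N, |g (j + 1) - g j| * ∑' m, p (j + 1 + m) :=
      sum_range_sum_range_mul_le_sum_range_mul_tsum (fun _ => abs_nonneg _) hp0 hp.summable N
    _ ≤ ∑ j ∈ range N, |g (j + 1) - g j| * (c * q j) := by gcongr with j; exact htail j
    _ = c * ∑ j ∈ range N, |g (j + 1) - g j| * q j := by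
      rw [mul_sum]; exact sum_congr rfl fun j _ => by ring
    _ ≤ c * S := by
      gcongr
      exact (hsum.sum_le_tsum _ fun j _ => by positivity [hq j]).trans hS
  have hBsum : Summable B := summable_of_sum_range_le hB0 hB
  rw [← Real.norm_eq_abs]
  refine (tsum_of_norm_bounded ((hp.mul_left |g 0|).add hBsum.hasSum) fun k => ?_).trans ?_
  · rw [Real.norm_eq_abs, abs_mul, abs_of_nonneg (hp0 k), ← add_mul]
    gcongr
    · exact hp0 k
    · exact abs_le_abs_zero_add_sum_range g k
  · linarith [Real.tsum_le_of_sum_range_le hB0 hB]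

lemma poiPMF_nonneg {x : ℝ} (hx : 0 ≤ x) (k : ℕ) : 0 ≤ poiPMF x k := by
  unfold poiPMF; positivity

lemma hasSum_poiPMF (x : ℝ) : HasSum (poiPMF x) 1 := by
  have := (NormedSpace.expSeries_div_hasSum_exp x).mul_left (exp (-x))
  rw [← exp_eq_exp_ℝ, ← exp_add, neg_add_cancel, exp_zero] at this
  unfold poiPMF
  simpa only [mul_div_assoc] using this

lemma poiPMF_add_le {x : ℝ} (hx : 0 ≤ x) (j n : ℕ) :
    poiPMF x (j + n) ≤ poiPMF x j * (x ^ n / n !) := by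
  have hfac : ((j ! * n ! : ℕ) : ℝ) ≤ (j + n)! := Nat.cast_le.mpr
    (Nat.le_of_dvd (Nat.factorial_pos _) (Nat.factorial_mul_factorial_dvd_factorial_add j n))
  calc poiPMF x (j + n) ≤ exp (-x) * x ^ (j + n) / (j ! * n ! : ℕ) := by
        unfold poiPMF; gcongr
    _ = poiPMF x j * (x ^ n / n !) := by unfold poiPMF; push_cast; ring

lemma hasSum_pow_succ_div_factorial (x : ℝ) :
    HasSum (fun m : ℕ => x ^ (m + 1) / (m + 1)!) (exp x - 1) := by
  simpa [← exp_eq_exp_ℝ] using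
    (hasSum_nat_add_iff' 1).mpr (NormedSpace.expSeries_div_hasSum_exp x)

lemma tsum_poiPMF_tail_le {x α : ℝ} (hx : 0 ≤ x) (hxα : x ≤ α) (j : ℕ) :
    ∑' m, poiPMF x (j + 1 + m) ≤ (exp α - 1) * poiPMF α j := by
  have hfactor (y : ℝ) : (exp y - 1) * poiPMF y j = y ^ j / j ! * (1 - exp (-y)) := by
    unfold poiPMF
    have : exp (-y) * exp y = 1 := by rw [← exp_add]; simp
    linear_combination (y ^ j / j !) * this
  calc ∑' m, poiPMF x (j + 1 + m) ≤ ∑' m : ℕ, poiPMF x j * (x ^ (m + 1) / (m + 1)!) := by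
        refine Summable.tsum_le_tsum (fun m => ?_)
          ((hasSum_poiPMF x).summable.comp_injective (add_right_injective _))
          ((hasSum_pow_succ_div_factorial x).summable.mul_left _)
        rw [add_right_comm]
        exact poiPMF_add_le hx j (m + 1)
    _ = (exp x - 1) * poiPMF x j := by
        rw [tsum_mul_left, (hasSum_pow_succ_div_factorial x).tsum_eq, mul_comm]
    _ ≤ (exp α - 1) * poiPMF α j := by
        have hexp : exp (-α) ≤ exp (-x) := exp_le_exp.mpr (neg_le_neg hxα)
        have hα : 0 ≤ α := hx.trans hxα
        rw [hfactor, hfactor]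
        gcongr
        linarith [exp_le_one_iff.mpr (neg_nonpos.mpr hx)]

theorem stmt6_general (h : ℕ → ℝ) (α ν : ℝ)
    (hsum : Summable fun k => |h (k + 2) - 2 * h (k + 1) + h k| * poiPMF α k)
    (hν : ∑' k : ℕ, |h (k + 2) - 2 * h (k + 1) + h k| * poiPMF α k ≤ ν) :
    ∀ x ∈ Set.Icc (0 : ℝ) α,
      |∑' k : ℕ, (h (k + 1) - h k) * poiPMF x k| ≤ (Real.exp α - 1) * ν + |h 1 - h 0| := by
  rintro x ⟨hx, hxα⟩
  have hΔ (k : ℕ) : |h (k + 1 + 1) - h (k + 1) - (h (k + 1) - h k)| =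
      |h (k + 2) - 2 * h (k + 1) + h k| := by
    ring_nf
  exact abs_tsum_mul_le_of_tsum_tail_le (g := fun k => h (k + 1) - h k) (poiPMF_nonneg hx)
    (hasSum_poiPMF x) (poiPMF_nonneg (hx.trans hxα))
    (sub_nonneg.mpr (one_le_exp (hx.trans hxα))) (tsum_poiPMF_tail_le hx hxα)
    (by simpa only [hΔ] using hsum) (by simpa only [hΔ] using hν)

/-- If `E[|Δ²h(V)|] ≤ ν < ∞` for `V ~ Poisson(α)`, then for all `x ∈ [0, α]` the derivative
`ĥ'(x) = ∑ (h(k+1) - h(k)) e^{-x} x^k / k!` of `ĥ` satisfies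
`|ĥ'(x)| ≤ (e^α - 1) ν + |h(1) - h(0)|`. -/
theorem stmt6 (h : ℕ → ℝ) (α ν : ℝ) (hα : 0 < α)
    (hsum : Summable fun k => |h (k + 2) - 2 * h (k + 1) + h k| * poiPMF α k)
    (hν : ∑' k : ℕ, |h (k + 2) - 2 * h (k + 1) + h k| * poiPMF α k ≤ ν) :
    ∀ x ∈ Set.Icc (0 : ℝ) α,
      |∑' k : ℕ, (h (k + 1) - h k) * poiPMF x k| ≤ (Real.exp α - 1) * ν + |h 1 - h 0| :=
  stmt6_general h α ν hsum hν
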